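/- Let p be an odd prime and let G be a finite group that is p-stable. Then G satisfies the following condition: for every subgroup M of G that is maximal with respect to the property O_p(M) ≠ 1 (i.e. O_p(M) ≠ 1 and every subgroup M' with M ≤ M' and O_p(M') ≠ 1 equals M), for every p-subgroup Q of M such that O_{p'}(M)·Q is normal in M, and for every x ∈ N_M(Q) with [[a,x],x] = 1 for all a ∈ Q, the image of x under the natural homomorphism N_M(Q) → N_M(Q)/C_M(Q) lies in O_p(N_M(Q)/C_M(Q)). -/

import Mathlib

open scoped commutatorElement

/-- `O_p(G)`: the largest normal `p`-subgroup of `G`. -/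
def pCore (p : ℕ) (G : Type*) [Group G] : Subgroup G :=
  sSup {N : Subgroup G | N.Normal ∧ IsPGroup p N}

instance relCent_normal {G : Type*} [Group G] (Q : Subgroup G) :
    ((Subgroup.centralizer (Q : Set G)).subgroupOf (Subgroup.normalizer (Q : Set G))).Normal := by
  rw [← Subgroup.normalizerMonoidHom_ker]
  exact MonoidHom.normal_ker _

/-- A group `G` is `p`-stable if for every `p`-subgroup `Q` and every `x ∈ N_G(Q)` with
`[[a,x],x] = 1` for all `a ∈ Q`, the image of `x` in `N_G(Q)/C_G(Q)` lies in
`O_p(N_G(Q)/C_G(Q))`. -/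
def IsPStable (p : ℕ) (G : Type*) [Group G] : Prop :=
  ∀ Q : Subgroup G, IsPGroup p Q →
    ∀ x : (Subgroup.normalizer (Q : Set G)), (∀ a ∈ Q, ⁅⁅a, (x : G)⁆, (x : G)⁆ = 1) →
      (QuotientGroup.mk x :
          (Subgroup.normalizer (Q : Set G)) ⧸ (Subgroup.centralizer (Q : Set G)).subgroupOf (Subgroup.normalizer (Q : Set G))) ∈
        pCore p ((Subgroup.normalizer (Q : Set G)) ⧸ (Subgroup.centralizer (Q : Set G)).subgroupOf (Subgroup.normalizer (Q : Set G)))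

/-- `O_{p'}(G)`: the largest normal subgroup of `G` of order coprime to `p`. -/
def pPrimeCore (p : ℕ) (G : Type*) [Group G] : Subgroup G :=
  sSup {N : Subgroup G | N.Normal ∧ (Nat.card N).Coprime p}

/-!
`p`-stability passes to subgroups, indeed along any injective homomorphism `f : H →* G`: `f`
induces an embedding `N_H(Q)/C_H(Q) ↪ N_G(f Q)/C_G(f Q)`, and the preimage of a normal
`p`-subgroup under an embedding is again a normal `p`-subgroup.
-/

open Function

section PCore

variable {p : ℕ} {G H : Type*} [Group G] [Group H]

theorem mem_pCore_iff {g : G} :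
    g ∈ pCore p G ↔ ∃ N : Subgroup G, N.Normal ∧ IsPGroup p N ∧ g ∈ N := by
  have hdir : DirectedOn (· ≤ ·) {N : Subgroup G | N.Normal ∧ IsPGroup p N} := by
    rintro A ⟨hA, hAp⟩ B ⟨hB, hBp⟩
    exact ⟨A ⊔ B, ⟨Subgroup.sup_normal A B, hAp.to_sup_of_normal_right hBp⟩,
      le_sup_left, le_sup_right⟩
  have hne : {N : Subgroup G | N.Normal ∧ IsPGroup p N}.Nonempty :=
    ⟨⊥, inferInstance, IsPGroup.of_bot⟩
  simp only [pCore, Subgroup.mem_sSup_of_directedOn hne hdir, Set.mem_ofPred_eq, and_assoc]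

theorem comap_pCore_le {f : H →* G} (hf : Injective f) : (pCore p G).comap f ≤ pCore p H := by
  intro h hh
  obtain ⟨N, hN, hNp, hfh⟩ := mem_pCore_iff.mp hh
  exact mem_pCore_iff.mpr ⟨N.comap f, hN.comap f, hNp.comap_of_injective f hf, hfh⟩

end PCore

namespace Subgroup

variable {G H : Type*} [Group G] [Group H]

abbrev automizer (Q : Subgroup G) : Type _ :=
  normalizer (Q : Set G) ⧸ (centralizer (Q : Set G)).subgroupOf (normalizer (Q : Set G))

def normalizerMap (f : H →* G) (Q : Subgroup H) :
    normalizer (Q : Set H) →* normalizer (Q.map f : Set G) :=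
  (f.comp (normalizer (Q : Set H)).subtype).codRestrict _ fun z ↦
    le_normalizer_map f ⟨z, z.2, rfl⟩

theorem centralizer_subgroupOf_le_comap_normalizerMap (f : H →* G) (Q : Subgroup H) :
    (centralizer (Q : Set H)).subgroupOf (normalizer (Q : Set H)) ≤
      ((centralizer (Q.map f : Set G)).subgroupOf (normalizer (Q.map f : Set G))).comap
        (normalizerMap f Q) := fun z hz ↦
  map_centralizer_le_centralizer_image _ f ⟨z, hz, rfl⟩

def automizerMap (f : H →* G) (Q : Subgroup H) : Q.automizer →* (Q.map f).automizer :=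
  QuotientGroup.map _ _ (normalizerMap f Q) (centralizer_subgroupOf_le_comap_normalizerMap f Q)

theorem automizerMap_injective {f : H →* G} (hf : Injective f) (Q : Subgroup H) :
    Injective (automizerMap f Q) := by
  refine (injective_iff_map_eq_one _).mpr fun a ha ↦ ?_
  induction a using QuotientGroup.induction_on with
  | H z =>
    rw [automizerMap, QuotientGroup.map_mk, QuotientGroup.eq_one_iff, mem_subgroupOf,
      mem_centralizer_iff] at ha
    rw [QuotientGroup.eq_one_iff, mem_subgroupOf, mem_centralizer_iff]
    exact fun b hb ↦ hf <| by rw [map_mul, map_mul]; exact ha (f b) ⟨b, hb, rfl⟩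

end Subgroup

open Subgroup in
theorem IsPStable.of_injective {p : ℕ} {G H : Type*} [Group G] [Group H] (hG : IsPStable p G)
    {f : H →* G} (hf : Injective f) : IsPStable p H := by
  intro Q hQ x hx
  have hfx : ∀ a ∈ Q.map f, ⁅⁅a, (normalizerMap f Q x : G)⁆, (normalizerMap f Q x : G)⁆ = 1 := by
    rintro - ⟨a, ha, rfl⟩
    change ⁅⁅f a, f x⁆, f x⁆ = 1
    rw [← map_commutatorElement, ← map_commutatorElement, hx a ha, map_one]
  exact comap_pCore_le (automizerMap_injective hf Q) (hG _ (hQ.map f) _ hfx)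

theorem pStable_implies_glauberman_condition_general (p : ℕ)
    (G : Type*) [Group G] (hG : IsPStable p G)
    (M : Subgroup G)
    (Q : Subgroup M) (hQ : IsPGroup p Q)
    (x : (Subgroup.normalizer (Q : Set M))) (hx : ∀ a ∈ Q, ⁅⁅a, (x : M)⁆, (x : M)⁆ = 1) :
    (QuotientGroup.mk x :
        (Subgroup.normalizer (Q : Set M)) ⧸ (Subgroup.centralizer (Q : Set M)).subgroupOf (Subgroup.normalizer (Q : Set M))) ∈
      pCore p ((Subgroup.normalizer (Q : Set M)) ⧸ (Subgroup.centralizer (Q : Set M)).subgroupOf (Subgroup.normalizer (Q : Set M))) :=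
  hG.of_injective M.subtype_injective Q hQ x hx

/-- If a finite group `G` is `p`-stable (`p` an odd prime), then for every subgroup `M`
maximal with respect to `O_p(M) ≠ 1`, every `p`-subgroup `Q` of `M` with `O_{p'}(M)·Q ⊴ M`,
and every `x ∈ N_M(Q)` with `[[a,x],x] = 1` for all `a ∈ Q`, the image of `x` in
`N_M(Q)/C_M(Q)` lies in `O_p(N_M(Q)/C_M(Q))`. -/
theorem pStable_implies_glauberman_condition (p : ℕ) (hp : p.Prime) (hodd : Odd p)
    (G : Type*) [Group G] [Finite G] (hG : IsPStable p G)
    (M : Subgroup G) (hM : pCore p M ≠ ⊥)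
    (hMmax : ∀ M' : Subgroup G, M ≤ M' → pCore p M' ≠ ⊥ → M' = M)
    (Q : Subgroup M) (hQ : IsPGroup p Q) (hQnorm : (pPrimeCore p M ⊔ Q).Normal)
    (x : (Subgroup.normalizer (Q : Set M))) (hx : ∀ a ∈ Q, ⁅⁅a, (x : M)⁆, (x : M)⁆ = 1) :
    (QuotientGroup.mk x :
        (Subgroup.normalizer (Q : Set M)) ⧸ (Subgroup.centralizer (Q : Set M)).subgroupOf (Subgroup.normalizer (Q : Set M))) ∈
      pCore p ((Subgroup.normalizer (Q : Set M)) ⧸ (Subgroup.centralizer (Q : Set M)).subgroupOf (Subgroup.normalizer (Q : Set M))) :=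
  pStable_implies_glauberman_condition_general p G hG M Q hQ x hx
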